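/- arXiv:2002.10043 — 5 statements merged into one kernel-verified Lean document; each statement's English description precedes it below -/
import Mathlib

section
/- Let p > 2 be a real number and define f(ε) = 1 − ε^p − (1−ε²)^{p/2} for ε ∈ [0, 1/√2]. Then for all ε ∈ [0, 1/√2], f(ε) ≥ 2·f(1/√2)·ε², i.e., 1 − ε^p − (1−ε²)^{p/2} ≥ 2(1 − 2·(1/2)^{p/2})·ε², with equality only at ε = 0 and ε = 1/√2. -/
open Real

lemma sharpness_key (q : ℝ) (hq : 1 < q) {t : ℝ} (ht0 : 0 < t) (ht1 : t < 1 / 2) :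
    2 * (1 - 2 * ((1 : ℝ) / 2) ^ q) * t < 1 - t ^ q - (1 - t) ^ q := by
  have sc := strictConvexOn_rpow hq
  have hq0 : q ≠ 0 := by linarith
  have ha : (0 : ℝ) < 1 - 2 * t := by linarith
  have hb : (0 : ℝ) < 2 * t := by linarith
  have h1 : t ^ q < (1 - 2 * t) * (0 : ℝ) ^ q + (2 * t) * ((1 : ℝ) / 2) ^ q := by
    have := sc.2 (Set.mem_Ici.2 le_rfl) (show (1:ℝ)/2 ∈ Set.Ici (0:ℝ) by norm_num)
      (by norm_num) ha hb (by ring)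
    have e : (1 - 2 * t) • (0 : ℝ) + (2 * t) • ((1 : ℝ) / 2) = t := by
      simp [smul_eq_mul]; ring
    rw [e] at this
    simpa [smul_eq_mul] using this
  have h2 : (1 - t) ^ q < (1 - 2 * t) * (1 : ℝ) ^ q + (2 * t) * ((1 : ℝ) / 2) ^ q := by
    have := sc.2 (show (1:ℝ) ∈ Set.Ici (0:ℝ) by norm_num)
      (show (1:ℝ)/2 ∈ Set.Ici (0:ℝ) by norm_num) (by norm_num) ha hb (by ring)
    have e : (1 - 2 * t) • (1 : ℝ) + (2 * t) • ((1 : ℝ) / 2) = 1 - t := by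
      simp [smul_eq_mul]; ring
    rw [e] at this
    simpa [smul_eq_mul] using this
  rw [Real.zero_rpow hq0] at h1
  rw [Real.one_rpow] at h2
  nlinarith [h1, h2]

/-- Sharpness inequality: for `p > 2` and `ε ∈ [0, 1/√2]`,
`1 - ε^p - (1-ε²)^(p/2) ≥ 2(1 - 2·(1/2)^(p/2))·ε²`, with equality only at `ε = 0` or `ε = 1/√2`. -/
theorem sharpness_ineq (p : ℝ) (hp : 2 < p) :
    ∀ ε ∈ Set.Icc (0 : ℝ) (1 / Real.sqrt 2),
      (2 * (1 - 2 * ((1 : ℝ) / 2) ^ (p / 2)) * ε ^ (2 : ℕ)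
          ≤ 1 - ε ^ p - (1 - ε ^ (2 : ℕ)) ^ (p / 2)) ∧
      (1 - ε ^ p - (1 - ε ^ (2 : ℕ)) ^ (p / 2)
          = 2 * (1 - 2 * ((1 : ℝ) / 2) ^ (p / 2)) * ε ^ (2 : ℕ)
        → ε = 0 ∨ ε = 1 / Real.sqrt 2) := by
  intro ε hε
  obtain ⟨hε0, hε1⟩ := hε
  set q : ℝ := p / 2 with hqdef
  have hq : 1 < q := by simp [hqdef]; linarith
  have hεp : ε ^ p = (ε ^ (2 : ℕ)) ^ q := by
    rw [← Real.rpow_natCast ε 2, ← Real.rpow_mul hε0]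
    congr 1; rw [hqdef]; ring
  have hsqrt2 : (0:ℝ) < Real.sqrt 2 := Real.sqrt_pos.2 (by norm_num)
  have hsq : ((1 : ℝ) / Real.sqrt 2) ^ (2 : ℕ) = 1 / 2 := by
    rw [div_pow, one_pow, sq_sqrt (by norm_num : (2:ℝ) ≥ 0)]
  rcases eq_or_lt_of_le hε0 with h0 | h0
  · -- ε = 0
    rw [← h0]
    constructor
    · simp [Real.zero_rpow (by positivity : p ≠ 0)]
    · intro _; left; rfl
  rcases eq_or_lt_of_le hε1 with h1 | h1
  · -- ε = 1/√2
    subst h1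
    rw [hεp, hsq]
    constructor
    · apply le_of_eq; ring
    · intro _; right; rfl
  · -- strict interior
    have ht0 : 0 < ε ^ (2 : ℕ) := by positivity
    have ht1 : ε ^ (2 : ℕ) < 1 / 2 := by
      calc ε ^ (2:ℕ) < (1 / Real.sqrt 2) ^ (2:ℕ) := by
            apply pow_lt_pow_left₀ h1 hε0; norm_num
        _ = 1 / 2 := hsq
    have key := sharpness_key q hq ht0 ht1
    rw [hεp]
    constructor
    · linarith
    · intro h; exfalso; linarith
end

section
/- Let p > 2 and η ≥ 0, and define f(ε) = (1+η²)^{p/2} + η^p − (1−ε²+η²)^{p/2} − (ε²+η²)^{p/2} for ε ∈ [0, 1/√2]. Then f(ε) ≥ 2·f(1/√2)·ε² for all ε ∈ [0,1/√2], where f(1/√2) = (1+η²)^{p/2} + η^p − 2(1/2+η²)^{p/2} > 0. -/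
open Real

/-- Noisy sharpness inequality: for `p > 2`, `η ≥ 0`, the function
`f(ε) = (1+η²)^(p/2) + η^p − (1−ε²+η²)^(p/2) − (ε²+η²)^(p/2)` satisfies
`f(ε) ≥ 2 f(1/√2) ε²` on `[0, 1/√2]`, and `f(1/√2) = (1+η²)^(p/2)+η^p−2(1/2+η²)^(p/2) > 0`. -/
theorem noisy_sharpness_ineq (p η : ℝ) (hp : 2 < p) (hη : 0 ≤ η) :
    (0 < (1 + η ^ (2 : ℕ)) ^ (p / 2) + η ^ p - 2 * ((1 : ℝ) / 2 + η ^ (2 : ℕ)) ^ (p / 2)) ∧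
    ∀ ε ∈ Set.Icc (0 : ℝ) (1 / Real.sqrt 2),
      2 * ((1 + η ^ (2 : ℕ)) ^ (p / 2) + η ^ p
            - 2 * ((1 : ℝ) / 2 + η ^ (2 : ℕ)) ^ (p / 2)) * ε ^ (2 : ℕ)
        ≤ (1 + η ^ (2 : ℕ)) ^ (p / 2) + η ^ p
            - (1 - ε ^ (2 : ℕ) + η ^ (2 : ℕ)) ^ (p / 2)
            - (ε ^ (2 : ℕ) + η ^ (2 : ℕ)) ^ (p / 2) := by
  have hq : 1 < p / 2 := by linarith
  have hη2 : (0:ℝ) ≤ η ^ (2:ℕ) := sq_nonneg η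
  have hηp : η ^ p = (η ^ (2:ℕ)) ^ (p / 2) := by
    rw [← Real.rpow_natCast η 2, ← Real.rpow_mul hη]
    congr 1
    push_cast
    ring
  have hmem1 : η ^ (2:ℕ) ∈ Set.Ici (0:ℝ) := hη2
  have hmem2 : (1:ℝ)/2 + η ^ (2:ℕ) ∈ Set.Ici (0:ℝ) := by
    simp only [Set.mem_Ici]; linarith
  have hmem3 : 1 + η ^ (2:ℕ) ∈ Set.Ici (0:ℝ) := by
    simp only [Set.mem_Ici]; linarith
  constructor
  · have h := (strictConvexOn_rpow hq).2 hmem1 hmem3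
      (by intro h; nlinarith) (by norm_num : (0:ℝ) < 1/2)
      (by norm_num : (0:ℝ) < 1/2) (by norm_num)
    simp only [smul_eq_mul] at h
    have hb : (1:ℝ)/2 * (η ^ (2:ℕ)) + 1/2 * (1 + η ^ (2:ℕ)) = 1/2 + η ^ (2:ℕ) := by ring
    rw [hb] at h
    rw [hηp]
    linarith
  · intro ε hε
    have ht0 : (0:ℝ) ≤ ε ^ (2:ℕ) := sq_nonneg ε
    have ht : ε ^ (2:ℕ) ≤ 1/2 := by
      have h1 : ε ^ (2:ℕ) ≤ (1 / Real.sqrt 2) ^ (2:ℕ) := by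
        exact pow_le_pow_left₀ hε.1 hε.2 2
      have h2 : (1 / Real.sqrt 2) ^ (2:ℕ) = 1/2 := by
        rw [div_pow, Real.sq_sqrt (by norm_num : (0:ℝ) ≤ 2)]; norm_num
      linarith [h1, h2 ▸ h1]
    have hcvx := convexOn_rpow hq.le
    have h1 := hcvx.2 hmem1 hmem2 (by linarith : (0:ℝ) ≤ 1 - 2 * ε ^ (2:ℕ))
      (by linarith : (0:ℝ) ≤ 2 * ε ^ (2:ℕ)) (by ring)
    have h2 := hcvx.2 hmem3 hmem2 (by linarith : (0:ℝ) ≤ 1 - 2 * ε ^ (2:ℕ))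
      (by linarith : (0:ℝ) ≤ 2 * ε ^ (2:ℕ)) (by ring)
    simp only [smul_eq_mul] at h1 h2
    have e1 : (1 - 2 * ε ^ (2:ℕ)) * (η ^ (2:ℕ)) + 2 * ε ^ (2:ℕ) * (1/2 + η ^ (2:ℕ))
        = ε ^ (2:ℕ) + η ^ (2:ℕ) := by ring
    have e2 : (1 - 2 * ε ^ (2:ℕ)) * (1 + η ^ (2:ℕ)) + 2 * ε ^ (2:ℕ) * (1/2 + η ^ (2:ℕ))
        = 1 - ε ^ (2:ℕ) + η ^ (2:ℕ) := by ring
    rw [e1] at h1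
    rw [e2] at h2
    rw [hηp]
    nlinarith [h1, h2]
end

section
/- Let p > 2 and θ ∈ (0,1). Define C_p = (1 − 2·(1/2)^{p/2})^{-1}. For any unit vector q ∈ ℝⁿ, let r = (1/2)·min over i of min{‖q − e_i‖₂², ‖q + e_i‖₂²}, where e_i are the standard basis vectors. Let Ω be a random subset of {1,…,n} including each index independently with probability θ. Then r ≤ (C_p/(θ(1−θ)))·(θ − E_Ω[‖q_Ω‖₂^p]). -/
open Real Finset

/-!
Write `x_Ω = ‖q_Ω‖₂² ∈ [0, 1]` and `σ = p / 2`. The elementary bound `x^σ ≤ d x + (1 - d) x²` on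
`[0, 1]`, with `d = 2^(1-σ)`, reduces `E x_Ω^σ` to the first two moments of `x_Ω`, namely `θ` and
`θ² + θ(1-θ) ∑ qᵢ⁴`. Hence `θ - E x_Ω^σ ≥ (1 - d) θ(1-θ) (1 - ∑ qᵢ⁴)`, and
`1 - ∑ qᵢ⁴ = ∑ qᵢ² (1 - qᵢ²) ≥ ∑ qᵢ² (1 - |qᵢ|) ≥ r`, since `r ≤ 1 - |qᵢ|` for every `i`.
-/

theorem one_sub_le_half_rpow {t : ℝ} (ht : 0 ≤ t) : 1 - t ≤ (1 / 2 : ℝ) ^ t := by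
  have hlog : log 2 ≤ 1 := by linarith [log_le_sub_one_of_pos (zero_lt_two' ℝ)]
  calc 1 - t ≤ 1 - log 2 * t := by nlinarith
    _ ≤ exp (-(log 2 * t)) := one_sub_le_exp_neg _
    _ = (1 / 2 : ℝ) ^ t := by
      rw [rpow_def_of_pos (by norm_num), one_div, log_inv, neg_mul]

theorem rpow_le_half_rpow_add_mul {t x : ℝ} (ht : 0 < t) (hx0 : 0 ≤ x) (hx1 : x ≤ 1) :
    x ^ t ≤ (1 / 2 : ℝ) ^ t + (1 - (1 / 2 : ℝ) ^ t) * x := by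
  have hd1 : (1 / 2 : ℝ) ^ t ≤ 1 := rpow_le_one (by norm_num) (by norm_num) ht.le
  rcases le_total x (1 / 2) with hx | hx
  · nlinarith [rpow_le_rpow hx0 hx ht.le]
  rcases le_total t 1 with ht1 | ht1
  · -- concave case: the tangent line at `1` lies below the line through `(0, 2⁻ᵗ)` and `(1, 1)`
    have hbern : x ^ t ≤ 1 + t * (x - 1) := by
      simpa using rpow_one_add_le_one_add_mul_self (s := x - 1) (by linarith) ht.le ht1
    nlinarith [one_sub_le_half_rpow ht.le]
  · -- convex case: compare with the chord over `[1/2, 1]`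
    have hchord := (convexOn_rpow ht1).2 (Set.mem_Ici.2 (by norm_num : (0 : ℝ) ≤ 1 / 2))
      (Set.mem_Ici.2 zero_le_one) (by linarith : (0 : ℝ) ≤ 2 * (1 - x))
      (by linarith : (0 : ℝ) ≤ 2 * x - 1) (by ring)
    simp only [smul_eq_mul, one_rpow] at hchord
    rw [show 2 * (1 - x) * (1 / 2) + (2 * x - 1) * 1 = x by ring] at hchord
    nlinarith

theorem two_mul_half_rpow_eq {s : ℝ} : 2 * (1 / 2 : ℝ) ^ s = (1 / 2 : ℝ) ^ (s - 1) := by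
  rw [rpow_sub (by norm_num), rpow_one]; ring

theorem two_mul_half_rpow_lt_one {s : ℝ} (hs : 1 < s) : 2 * (1 / 2 : ℝ) ^ s < 1 := by
  rw [two_mul_half_rpow_eq]
  exact rpow_lt_one (by norm_num) (by norm_num) (by linarith)

theorem rpow_le_mul_add_mul_sq {s x : ℝ} (hs : 1 < s) (hx0 : 0 ≤ x) (hx1 : x ≤ 1) :
    x ^ s ≤ 2 * (1 / 2 : ℝ) ^ s * x + (1 - 2 * (1 / 2 : ℝ) ^ s) * x ^ 2 := by
  rcases hx0.eq_or_lt with rfl | hx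
  · simp [zero_rpow (by linarith : s ≠ 0)]
  calc x ^ s = x * x ^ (s - 1) := by rw [rpow_sub hx, rpow_one]; field_simp
    _ ≤ x * ((1 / 2 : ℝ) ^ (s - 1) + (1 - (1 / 2 : ℝ) ^ (s - 1)) * x) :=
      mul_le_mul_of_nonneg_left (rpow_le_half_rpow_add_mul (by linarith) hx0 hx1) hx0
    _ = _ := by rw [two_mul_half_rpow_eq]; ring

section Bernoulli

variable {ι : Type*} (θ : ℝ)

/-- The expectation of `f Ω` for a random subset `Ω ⊆ s` containing each element independently
with probability `θ`. -/
def bernoulliExpect (s : Finset ι) (f : Finset ι → ℝ) : ℝ :=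
  ∑ S ∈ s.powerset, θ ^ S.card * (1 - θ) ^ (s.card - S.card) * f S

theorem bernoulliExpect_const (s : Finset ι) (c : ℝ) : bernoulliExpect θ s (fun _ => c) = c := by
  rw [bernoulliExpect, ← sum_mul, sum_pow_mul_eq_add_pow, add_sub_cancel, one_pow, one_mul]

theorem bernoulliExpect_add (s : Finset ι) (f g : Finset ι → ℝ) :
    bernoulliExpect θ s (fun S => f S + g S) = bernoulliExpect θ s f + bernoulliExpect θ s g := by
  simp only [bernoulliExpect, mul_add, sum_add_distrib]

theorem bernoulliExpect_const_mul (s : Finset ι) (c : ℝ) (f : Finset ι → ℝ) :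
    bernoulliExpect θ s (fun S => c * f S) = c * bernoulliExpect θ s f := by
  simp only [bernoulliExpect, mul_sum, mul_left_comm c]

theorem bernoulliExpect_congr {s : Finset ι} {f g : Finset ι → ℝ} (h : ∀ S ⊆ s, f S = g S) :
    bernoulliExpect θ s f = bernoulliExpect θ s g :=
  sum_congr rfl fun S hS => by rw [h S (mem_powerset.1 hS)]

variable [DecidableEq ι]

theorem bernoulliExpect_insert {a : ι} {s : Finset ι} (ha : a ∉ s) (f : Finset ι → ℝ) :
    bernoulliExpect θ (insert a s) f =
      (1 - θ) * bernoulliExpect θ s f + θ * bernoulliExpect θ s (fun T => f (insert a T)) := by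
  simp only [bernoulliExpect, sum_powerset_insert ha, mul_sum]
  congr 1 <;> refine sum_congr rfl fun T hT => ?_
  · rw [card_insert_of_notMem ha, Nat.succ_sub (card_le_card (mem_powerset.1 hT)), pow_succ]
    ring
  · rw [card_insert_of_notMem ha, card_insert_of_notMem fun h => ha (mem_powerset.1 hT h),
      Nat.succ_sub_succ, pow_succ]
    ring

theorem bernoulliExpect_sum (s : Finset ι) (a : ι → ℝ) :
    bernoulliExpect θ s (fun S => ∑ i ∈ S, a i) = θ * ∑ i ∈ s, a i := by
  induction s using Finset.induction_on with
  | empty => simp [bernoulliExpect]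
  | @insert j s hj ih =>
    have hstep : bernoulliExpect θ s (fun T => ∑ i ∈ insert j T, a i) =
        bernoulliExpect θ s (fun T => a j + ∑ i ∈ T, a i) :=
      bernoulliExpect_congr θ fun T hT => sum_insert fun h => hj (hT h)
    rw [bernoulliExpect_insert θ hj, hstep, bernoulliExpect_add, bernoulliExpect_const, ih,
      sum_insert hj]
    ring

theorem bernoulliExpect_sum_sq (s : Finset ι) (a : ι → ℝ) :
    bernoulliExpect θ s (fun S => (∑ i ∈ S, a i) ^ 2) =
      θ ^ 2 * (∑ i ∈ s, a i) ^ 2 + θ * (1 - θ) * ∑ i ∈ s, a i ^ 2 := by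
  induction s using Finset.induction_on with
  | empty => simp [bernoulliExpect]
  | @insert j s hj ih =>
    have hstep : bernoulliExpect θ s (fun T => (∑ i ∈ insert j T, a i) ^ 2) =
        bernoulliExpect θ s (fun T => a j ^ 2 + (2 * a j * ∑ i ∈ T, a i + (∑ i ∈ T, a i) ^ 2)) :=
      bernoulliExpect_congr θ fun T hT => by rw [sum_insert fun h => hj (hT h)]; ring
    rw [bernoulliExpect_insert θ hj, hstep, bernoulliExpect_add, bernoulliExpect_add,
      bernoulliExpect_const, bernoulliExpect_const_mul, bernoulliExpect_sum, ih, sum_insert hj,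
      sum_insert hj]
    ring

end Bernoulli

theorem bernoulliExpect_mono {ι : Type*} {θ : ℝ} (hθ : θ ∈ Set.Icc 0 1) {s : Finset ι}
    {f g : Finset ι → ℝ} (h : ∀ S ⊆ s, f S ≤ g S) : bernoulliExpect θ s f ≤ bernoulliExpect θ s g :=
  sum_le_sum fun S hS => mul_le_mul_of_nonneg_left (h S (mem_powerset.1 hS))
    (mul_nonneg (pow_nonneg hθ.1 _) (pow_nonneg (sub_nonneg.2 hθ.2) _))

theorem bernoulliExpect_rpow_sum_le {ι : Type*} [DecidableEq ι] {θ σ : ℝ} (hθ : θ ∈ Set.Icc 0 1)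
    (hσ : 1 < σ) {s : Finset ι} {a : ι → ℝ} (ha : ∀ i ∈ s, 0 ≤ a i) (hsum : ∑ i ∈ s, a i = 1) :
    bernoulliExpect θ s (fun S => (∑ i ∈ S, a i) ^ σ) ≤
      θ - (1 - 2 * (1 / 2 : ℝ) ^ σ) * (θ * (1 - θ)) * (1 - ∑ i ∈ s, a i ^ 2) := by
  set d := 2 * (1 / 2 : ℝ) ^ σ
  calc bernoulliExpect θ s (fun S => (∑ i ∈ S, a i) ^ σ)
      ≤ bernoulliExpect θ s (fun S => d * ∑ i ∈ S, a i + (1 - d) * (∑ i ∈ S, a i) ^ 2) :=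
        bernoulliExpect_mono hθ fun S hS => rpow_le_mul_add_mul_sq hσ
          (sum_nonneg fun i hi => ha i (hS hi))
          (hsum ▸ sum_le_sum_of_subset_of_nonneg hS fun i hi _ => ha i hi)
    _ = θ - (1 - d) * (θ * (1 - θ)) * (1 - ∑ i ∈ s, a i ^ 2) := by
        rw [bernoulliExpect_add, bernoulliExpect_const_mul, bernoulliExpect_const_mul,
          bernoulliExpect_sum, bernoulliExpect_sum_sq, hsum]
        ring

theorem sum_sq_sub_ite {ι : Type*} [Fintype ι] [DecidableEq ι] (q : ι → ℝ) (i : ι) :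
    ∑ j, (q j - if j = i then 1 else 0) ^ 2 = ∑ j, q j ^ 2 + 1 - 2 * q i := by
  simp only [sub_sq, mul_ite, ite_pow, mul_one, mul_zero, one_pow, zero_pow two_ne_zero,
    sum_add_distrib, sum_sub_distrib, sum_ite_eq', if_pos (mem_univ i)]
  ring

theorem sum_sq_add_ite {ι : Type*} [Fintype ι] [DecidableEq ι] (q : ι → ℝ) (i : ι) :
    ∑ j, (q j + if j = i then 1 else 0) ^ 2 = ∑ j, q j ^ 2 + 1 + 2 * q i := by
  simp only [add_sq, mul_ite, ite_pow, mul_one, mul_zero, one_pow, zero_pow two_ne_zero,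
    sum_add_distrib, sum_ite_eq', if_pos (mem_univ i)]
  ring

theorem min_sum_sq_sub_add_ite {ι : Type*} [Fintype ι] [DecidableEq ι] (q : ι → ℝ) (i : ι) :
    min (∑ j, (q j - if j = i then 1 else 0) ^ 2) (∑ j, (q j + if j = i then 1 else 0) ^ 2) =
      ∑ j, q j ^ 2 + 1 - 2 * |q i| := by
  rw [sum_sq_sub_ite, sum_sq_add_ite]
  rcases le_total 0 (q i) with h | h
  · rw [abs_of_nonneg h, min_eq_left (by linarith)]
  · rw [abs_of_nonpos h, min_eq_right (by linarith)]; ring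

theorem half_inf'_min_sum_sq_le_one_sub_abs {ι : Type*} [Fintype ι] [DecidableEq ι]
    [Nonempty ι] {q : ι → ℝ} (hq : ∑ i, q i ^ 2 = 1) (i : ι) :
    (1 / 2) * univ.inf' univ_nonempty (fun i =>
        min (∑ j, (q j - if j = i then 1 else 0) ^ 2) (∑ j, (q j + if j = i then 1 else 0) ^ 2))
      ≤ 1 - |q i| := by
  have := inf'_le (fun i =>
    min (∑ j, (q j - if j = i then 1 else 0) ^ 2) (∑ j, (q j + if j = i then 1 else 0) ^ 2))
    (mem_univ i)
  rw [min_sum_sq_sub_add_ite, hq] at this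
  linarith

theorem le_one_sub_sum_sq_sq {ι : Type*} [Fintype ι] {q : ι → ℝ} (hq : ∑ i, q i ^ 2 = 1)
    {r : ℝ} (hr : ∀ i, r ≤ 1 - |q i|) : r ≤ 1 - ∑ i, (q i ^ 2) ^ 2 := by
  have hsq_le_abs : ∀ i, q i ^ 2 ≤ |q i| := fun i => by
    have : q i ^ 2 ≤ 1 := hq ▸ single_le_sum (fun j _ => sq_nonneg (q j)) (mem_univ i)
    nlinarith [sq_abs (q i), abs_nonneg (q i)]
  calc r = ∑ i, q i ^ 2 * r := by rw [← sum_mul, hq, one_mul]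
    _ ≤ ∑ i, q i ^ 2 * (1 - q i ^ 2) := sum_le_sum fun i _ =>
        mul_le_mul_of_nonneg_left ((hr i).trans (by linarith [hsq_le_abs i])) (sq_nonneg _)
    _ = 1 - ∑ i, (q i ^ 2) ^ 2 := by simp only [mul_sub, mul_one, sum_sub_distrib, hq]; ring_nf

/-- Sharpness over the sphere: half the squared distance of a unit vector `q` to the nearest
signed coordinate vector is controlled by the deficiency `θ − E_Ω ‖q_Ω‖₂^p`. -/
theorem sphere_sharpness (n : ℕ) (p θ : ℝ) (hp : 2 < p) (hθ : θ ∈ Set.Ioo (0 : ℝ) 1)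
    (q : Fin (n + 1) → ℝ) (hq : ∑ i, q i ^ 2 = 1) :
    (1 / 2) * (Finset.univ.inf' Finset.univ_nonempty (fun i : Fin (n + 1) =>
        min (∑ j, (q j - (if j = i then 1 else 0)) ^ 2)
            (∑ j, (q j + (if j = i then 1 else 0)) ^ 2)))
      ≤ (1 - 2 * ((1 : ℝ) / 2) ^ (p / 2))⁻¹ / (θ * (1 - θ)) *
          (θ - ∑ S ∈ (Finset.univ : Finset (Fin (n + 1))).powerset,
            θ ^ S.card * (1 - θ) ^ (n + 1 - S.card) * (∑ i ∈ S, q i ^ 2) ^ (p / 2)) := by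
  obtain ⟨hθ0, hθ1⟩ := hθ
  have hσ : 1 < p / 2 := by linarith
  have hc : 0 < 1 - 2 * (1 / 2 : ℝ) ^ (p / 2) := sub_pos.2 (two_mul_half_rpow_lt_one hσ)
  have hE := bernoulliExpect_rpow_sum_le ⟨hθ0.le, hθ1.le⟩ hσ (fun i _ => sq_nonneg (q i)) hq
  rw [bernoulliExpect, card_univ, Fintype.card_fin] at hE
  refine (le_one_sub_sum_sq_sq hq (half_inf'_min_sum_sq_le_one_sub_abs hq)).trans ?_
  rw [div_mul_eq_mul_div, le_div_iff₀ (mul_pos hθ0 (sub_pos.2 hθ1)), inv_mul_eq_div,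
    le_div_iff₀' hc]
  linear_combination hE
end

section
/- Let θ ∈ (0,1), let q ∈ ℝⁿ be a unit vector with all coordinates nonnegative and q_n ≥ q_i for all i, let p > 2, k = p − 2. Consider the population GPM update a⁺ = E_Ω[‖q_Ω‖₂^k · q_Ω] / ‖E_Ω[‖q_Ω‖₂^k · q_Ω]‖₂ where Ω is a θ-Bernoulli random subset of {1,…,n}. Then the n-th coordinate of the unnormalized gradient satisfies E_Ω[‖q_Ω‖₂^k·q_Ω]_i = q_i·(θ²·E_{Ω'}[‖(q_{Ω'}, q_i, q_n)‖₂^k] + θ(1−θ)·E_{Ω'}[‖(q_{Ω'}, q_i)‖₂^k]) for each i ≠ n, where Ω' = Ω∖{i,n} restricted to a θ-Bernoulli subset of {1,…,n}∖{i,n}. -/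
/-!
Condition the Bernoulli subset `Ω` first on `i` and then on `b`: the event `i ∉ Ω` contributes
nothing, and on `i ∈ Ω` the coordinate `q_i` factors out of `‖q_Ω‖₂^k q_i`.
-/

open Real Finset

/-- Expectation of `f` over a `θ`-Bernoulli random subset of `T`. -/
def EW {n : ℕ} (θ : ℝ) (T : Finset (Fin n)) (f : Finset (Fin n) → ℝ) : ℝ :=
  ∑ S ∈ T.powerset, θ ^ S.card * (1 - θ) ^ (T.card - S.card) * f S

section EW

variable {n : ℕ} (θ : ℝ) {T : Finset (Fin n)}

theorem EW_congr {f g : Finset (Fin n) → ℝ} (h : ∀ S ⊆ T, f S = g S) :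
    EW θ T f = EW θ T g :=
  sum_congr rfl fun S hS => by rw [h S (mem_powerset.mp hS)]

theorem EW_zero : EW θ T (fun _ => 0) = 0 := by
  simp [EW]

theorem EW_mul_const (f : Finset (Fin n) → ℝ) (c : ℝ) :
    EW θ T (fun S => f S * c) = EW θ T f * c := by
  simp only [EW, sum_mul, mul_assoc]

theorem EW_insert {a : Fin n} (ha : a ∉ T) (f : Finset (Fin n) → ℝ) :
    EW θ (insert a T) f =
      θ * EW θ T (fun S => f (insert a S)) + (1 - θ) * EW θ T f := by
  rw [EW, sum_powerset_insert ha, card_insert_of_notMem ha, add_comm, EW, EW, mul_sum, mul_sum]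
  congr 1 <;> refine sum_congr rfl fun S hS => ?_
  · have haS : a ∉ S := fun h => ha (mem_powerset.mp hS h)
    rw [card_insert_of_notMem haS, Nat.add_sub_add_right]
    ring
  · have hST : S.card ≤ T.card := card_le_card (mem_powerset.mp hS)
    rw [Nat.sub_add_comm hST]
    ring

end EW

theorem gpm_gradient_coordinate_general (n : ℕ) (p θ : ℝ) (q : Fin n → ℝ) (b : Fin n) (i : Fin n)
    (hib : i ≠ b) :
    EW θ Finset.univ (fun S =>
        if i ∈ S then (∑ j ∈ S, q j ^ 2) ^ ((p - 2) / 2) * q i else 0) =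
      q i * (θ ^ 2 *
          EW θ (Finset.univ \ {i, b})
            (fun S => (∑ j ∈ S, q j ^ 2 + q i ^ 2 + q b ^ 2) ^ ((p - 2) / 2)) +
        θ * (1 - θ) *
          EW θ (Finset.univ \ {i, b})
            (fun S => (∑ j ∈ S, q j ^ 2 + q i ^ 2) ^ ((p - 2) / 2))) := by
  set T := (Finset.univ \ {i, b} : Finset (Fin n))
  have hbT : b ∉ T := by simp [T]
  have hibT : i ∉ insert b T := by simp [T, hib]
  have huniv : (Finset.univ : Finset (Fin n)) = insert i (insert b T) := by
    ext x
    by_cases hxi : x = i <;> by_cases hxb : x = b <;> simp [T, hxi, hxb]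
  have hwithout_i : EW θ (insert b T) (fun S =>
      if i ∈ S then (∑ j ∈ S, q j ^ 2) ^ ((p - 2) / 2) * q i else 0) = 0 := by
    rw [EW_congr θ fun S hS => if_neg fun hiS => hibT (hS hiS), EW_zero]
  rw [huniv, EW_insert θ hibT, hwithout_i]
  simp only [mem_insert_self, if_true]
  rw [EW_mul_const, EW_insert θ hbT]
  have hsum_with_b : EW θ T (fun S => (∑ j ∈ insert i (insert b S), q j ^ 2) ^ ((p - 2) / 2)) =
      EW θ T (fun S => (∑ j ∈ S, q j ^ 2 + q i ^ 2 + q b ^ 2) ^ ((p - 2) / 2)) := by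
    refine EW_congr θ fun S hS => ?_
    have hbS : b ∉ S := fun h => hbT (hS h)
    rw [sum_insert fun h => hibT (insert_subset_insert b hS h), sum_insert hbS]
    congr 1
    ring
  have hsum_without_b : EW θ T (fun S => (∑ j ∈ insert i S, q j ^ 2) ^ ((p - 2) / 2)) =
      EW θ T (fun S => (∑ j ∈ S, q j ^ 2 + q i ^ 2) ^ ((p - 2) / 2)) := by
    refine EW_congr θ fun S hS => ?_
    rw [sum_insert fun h => hibT (mem_insert_of_mem (hS h)), add_comm]
  rw [hsum_with_b, hsum_without_b]
  ring

/-- Decomposition of the `i`-th coordinate of the unnormalized population GPM gradient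
`E_Ω[‖q_Ω‖₂^k q_Ω]` according to whether the signal index `b` belongs to `Ω`. -/
theorem gpm_gradient_coordinate (n : ℕ) (p θ : ℝ) (hp : 2 < p) (hθ : θ ∈ Set.Ioo (0 : ℝ) 1)
    (q : Fin n → ℝ) (hq : ∑ j, q j ^ 2 = 1) (hnonneg : ∀ j, 0 ≤ q j)
    (b : Fin n) (hb : ∀ j, q j ≤ q b) (i : Fin n) (hib : i ≠ b) :
    EW θ Finset.univ (fun S =>
        if i ∈ S then (∑ j ∈ S, q j ^ 2) ^ ((p - 2) / 2) * q i else 0) =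
      q i * (θ ^ 2 *
          EW θ (Finset.univ \ {i, b})
            (fun S => (∑ j ∈ S, q j ^ 2 + q i ^ 2 + q b ^ 2) ^ ((p - 2) / 2)) +
        θ * (1 - θ) *
          EW θ (Finset.univ \ {i, b})
            (fun S => (∑ j ∈ S, q j ^ 2 + q i ^ 2) ^ ((p - 2) / 2))) :=
  gpm_gradient_coordinate_general n p θ q b i hib
end

section
/- Let p > 2, η ≥ 0, θ ∈ (0,1). Let q ∈ ℝⁿ be a unit vector and Ω a θ-Bernoulli random subset of {1,…,n}. Then E_Ω[(‖q_Ω‖₂² + η²)^{p/2}] ≤ θ(1+η²)^{p/2} + (1−θ)η^p, with equality if and only if q has exactly one nonzero coordinate. -/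
/-!
For `s ∈ [0, 1]`, convexity of `s ↦ (s + η²)^(p/2)` puts it below its chord
`(1 - s) η^p + s (1 + η²)^(p/2)`. Applying this to `s = ‖q_Ω‖²` and averaging gives the bound,
because the chord is affine and `E_Ω ‖q_Ω‖² = θ`. Since every `Ω` has positive probability,
equality forces the strict convexity to be tight for all `Ω`, i.e. `‖q_Ω‖² ∈ {0, 1}`, and for a
unit vector this happens exactly when `q` has a single nonzero coordinate.
-/

open Real Finset

section BernoulliSubset

variable {ι : Type*} [Fintype ι]

/-- The probability that a `θ`-Bernoulli random subset of `ι` equals `S`. -/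
def bernoulliSubsetWeight (θ : ℝ) (S : Finset ι) : ℝ :=
  θ ^ #S * (1 - θ) ^ (Fintype.card ι - #S)

lemma bernoulliSubsetWeight_pos {θ : ℝ} (hθ : θ ∈ Set.Ioo (0 : ℝ) 1) (S : Finset ι) :
    0 < bernoulliSubsetWeight θ S :=
  mul_pos (pow_pos hθ.1 _) (pow_pos (sub_pos.2 hθ.2) _)

lemma sum_bernoulliSubsetWeight (θ : ℝ) : ∑ S : Finset ι, bernoulliSubsetWeight θ S = 1 := by
  simpa [bernoulliSubsetWeight] using Fintype.sum_pow_mul_eq_add_pow ι θ (1 - θ)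

lemma sum_bernoulliSubsetWeight_of_mem [DecidableEq ι] (θ : ℝ) (i : ι) :
    ∑ S : Finset ι with i ∈ S, bernoulliSubsetWeight θ S = θ := by
  -- Expand `∏ j, (θ + [j ≠ i] (1 - θ)) = θ`: the terms with `i ∉ S` vanish.
  have key := prod_add (fun _ ↦ θ) (fun j ↦ if j = i then 0 else 1 - θ) (univ : Finset ι)
  rw [Fintype.prod_eq_single i fun j hj ↦ by simp [hj], if_pos rfl, add_zero,
    powerset_univ] at key
  rw [sum_filter]
  refine (sum_congr rfl fun S _ ↦ ?_).trans key.symm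
  rw [prod_const, ← compl_eq_univ_sdiff]
  split_ifs with hi
  · rw [prod_congr rfl fun j hj ↦ if_neg (by rintro rfl; exact (mem_compl.1 hj) hi),
      prod_const, card_compl]
    rfl
  · rw [prod_eq_zero (mem_compl.2 hi) (by simp), mul_zero]

lemma sum_bernoulliSubsetWeight_mul_sum (θ : ℝ) (f : ι → ℝ) :
    ∑ S : Finset ι, bernoulliSubsetWeight θ S * ∑ i ∈ S, f i = θ * ∑ i, f i := by
  classical
  calc ∑ S : Finset ι, bernoulliSubsetWeight θ S * ∑ i ∈ S, f i
      = ∑ S : Finset ι, ∑ i, if i ∈ S then bernoulliSubsetWeight θ S * f i else 0 := by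
        simp_rw [sum_ite_mem, univ_inter, mul_sum]
    _ = ∑ i, (∑ S : Finset ι with i ∈ S, bernoulliSubsetWeight θ S) * f i := by
        rw [sum_comm]
        simp_rw [sum_filter, sum_mul, ite_mul, zero_mul]
    _ = θ * ∑ i, f i := by simp_rw [sum_bernoulliSubsetWeight_of_mem, mul_sum]

lemma sum_bernoulliSubsetWeight_mul_chord (θ a b : ℝ) (f : ι → ℝ) :
    ∑ S : Finset ι, bernoulliSubsetWeight θ S * ((1 - ∑ i ∈ S, f i) * a + (∑ i ∈ S, f i) * b) =
      (1 - θ * ∑ i, f i) * a + θ * (∑ i, f i) * b := by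
  simp_rw [show ∀ s : ℝ, (1 - s) * a + s * b = a + (b - a) * s by intro; ring, mul_add,
    sum_add_distrib, ← sum_mul, sum_bernoulliSubsetWeight, mul_left_comm _ (b - a), ← mul_sum,
    sum_bernoulliSubsetWeight_mul_sum]
  ring

end BernoulliSubset

section Chord

variable {c r t : ℝ}

lemma add_rpow_le_chord (hc : 0 ≤ c) (hr : 1 ≤ r) (ht₀ : 0 ≤ t) (ht₁ : t ≤ 1) :
    (t + c) ^ r ≤ (1 - t) * c ^ r + t * (1 + c) ^ r := by
  have h := (convexOn_rpow hr).2 (Set.mem_Ici.2 hc) (Set.mem_Ici.2 (by linarith : 0 ≤ 1 + c))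
    (sub_nonneg.2 ht₁) ht₀ (by ring)
  simp only [smul_eq_mul] at h
  rwa [show (1 - t) * c + t * (1 + c) = t + c by ring] at h

lemma add_rpow_eq_chord_iff (hc : 0 ≤ c) (hr : 1 < r) (ht₀ : 0 ≤ t) (ht₁ : t ≤ 1) :
    (t + c) ^ r = (1 - t) * c ^ r + t * (1 + c) ^ r ↔ t = 0 ∨ t = 1 := by
  refine ⟨fun heq ↦ ?_, ?_⟩
  · by_contra! hne
    have h := (strictConvexOn_rpow hr).2 (Set.mem_Ici.2 hc)
      (Set.mem_Ici.2 (by linarith : 0 ≤ 1 + c)) (by linarith : c ≠ 1 + c)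
      (sub_pos.2 (lt_of_le_of_ne ht₁ hne.2)) (lt_of_le_of_ne ht₀ hne.1.symm) (by ring)
    simp only [smul_eq_mul] at h
    rw [show (1 - t) * c + t * (1 + c) = t + c by ring] at h
    exact h.ne heq
  · rintro (rfl | rfl) <;> simp

end Chord

lemma sum_subset_eq_zero_or_one_iff {ι : Type*} [Fintype ι] {x : ι → ℝ}
    (hx : ∑ i, x i = 1) :
    (∀ S : Finset ι, ∑ i ∈ S, x i = 0 ∨ ∑ i ∈ S, x i = 1) ↔ ∃! i, x i ≠ 0 := by
  classical
  constructor
  · intro h01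
    have hone : ∀ i, x i ≠ 0 → x i = 1 := fun i hi ↦ by simpa [hi] using h01 {i}
    obtain ⟨i, hi⟩ : ∃ i, x i ≠ 0 := by
      by_contra! h
      simp [h] at hx
    refine ⟨i, hi, fun j hj ↦ ?_⟩
    by_contra hji
    have := h01 {j, i}
    rw [sum_pair hji, hone i hi, hone j hj] at this
    norm_num at this
  · rintro ⟨i, -, hi⟩
    have hzero : ∀ j ≠ i, x j = 0 := fun j hj ↦ by_contra fun h ↦ hj (hi j h)
    have hxi : x i = 1 := by rwa [Fintype.sum_eq_single i hzero] at hx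
    intro S
    by_cases hiS : i ∈ S
    · right
      rw [sum_eq_single_of_mem i hiS fun j _ hj ↦ hzero j hj, hxi]
    · left
      exact sum_eq_zero fun j hj ↦ hzero j (ne_of_mem_of_not_mem hj hiS)

/-- Noisy population correctness: for a unit vector `q` and a `θ`-Bernoulli subset `Ω`,
`E_Ω (‖q_Ω‖₂² + η²)^(p/2) ≤ θ(1+η²)^(p/2) + (1−θ)η^p`, with equality iff `q` has exactly one
nonzero coordinate. -/
theorem noisy_bernoulli_subset_bound (n : ℕ) (p η θ : ℝ) (hp : 2 < p) (hη : 0 ≤ η)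
    (hθ : θ ∈ Set.Ioo (0 : ℝ) 1) (q : Fin n → ℝ) (hq : ∑ i, q i ^ 2 = 1) :
    (∑ S ∈ (Finset.univ : Finset (Fin n)).powerset,
        θ ^ S.card * (1 - θ) ^ (n - S.card) *
          ((∑ i ∈ S, q i ^ 2) + η ^ 2) ^ (p / 2)
      ≤ θ * (1 + η ^ 2) ^ (p / 2) + (1 - θ) * η ^ p) ∧
    ((∑ S ∈ (Finset.univ : Finset (Fin n)).powerset,
        θ ^ S.card * (1 - θ) ^ (n - S.card) *
          ((∑ i ∈ S, q i ^ 2) + η ^ 2) ^ (p / 2)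
      = θ * (1 + η ^ 2) ^ (p / 2) + (1 - θ) * η ^ p)
      ↔ ∃! i, q i ≠ 0) := by
  set w := bernoulliSubsetWeight (ι := Fin n) θ
  set t : Finset (Fin n) → ℝ := fun S ↦ ∑ i ∈ S, q i ^ 2
  set chord : ℝ → ℝ := fun s ↦ (1 - s) * (η ^ 2) ^ (p / 2) + s * (1 + η ^ 2) ^ (p / 2)
  have hr : 1 < p / 2 := by linarith
  have ht₀ (S : Finset (Fin n)) : 0 ≤ t S := sum_nonneg fun i _ ↦ sq_nonneg _
  have ht₁ (S : Finset (Fin n)) : t S ≤ 1 :=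
    hq ▸ sum_le_sum_of_subset_of_nonneg (subset_univ S) fun i _ _ ↦ sq_nonneg _
  have hlhs : ∑ S ∈ (univ : Finset (Fin n)).powerset, θ ^ #S * (1 - θ) ^ (n - #S) *
      (t S + η ^ 2) ^ (p / 2) = ∑ S, w S * (t S + η ^ 2) ^ (p / 2) := by
    simp [w, bernoulliSubsetWeight]
  have hrhs : ∑ S, w S * chord (t S) = θ * (1 + η ^ 2) ^ (p / 2) + (1 - θ) * η ^ p := by
    have hηp : (η ^ 2) ^ (p / 2) = η ^ p := by
      rw [← rpow_natCast, ← rpow_mul hη]; congr 1; ring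
    rw [sum_bernoulliSubsetWeight_mul_chord, hq, hηp]
    ring
  have hle (S) (_ : S ∈ univ) : w S * (t S + η ^ 2) ^ (p / 2) ≤ w S * chord (t S) :=
    mul_le_mul_of_nonneg_left (add_rpow_le_chord (sq_nonneg η) hr.le (ht₀ S) (ht₁ S))
      (bernoulliSubsetWeight_pos hθ S).le
  rw [hlhs, ← hrhs, sum_eq_sum_iff_of_le hle]
  refine ⟨sum_le_sum hle, ?_⟩
  have hpt (S : Finset (Fin n)) :
      w S * (t S + η ^ 2) ^ (p / 2) = w S * chord (t S) ↔ t S = 0 ∨ t S = 1 :=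
    (mul_right_inj' (bernoulliSubsetWeight_pos hθ S).ne').trans
      (add_rpow_eq_chord_iff (sq_nonneg η) hr (ht₀ S) (ht₁ S))
  simp only [mem_univ, true_implies, hpt]
  simpa using sum_subset_eq_zero_or_one_iff hq
end
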